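/- Let c > 0. Suppose u is a smooth real-valued function on ℝ², 2π-periodic in the second variable y, such that u and all its partial derivatives tend to 0 as |x| → ∞ faster than any negative power of |x|, uniformly in y, and u satisfies the heat-type equation ∂_y u = ∂_x(∂_x u + 2Q_c(x)·u) on ℝ². Then there exists α ∈ ℝ such that u(x,y) = α·Q_c'(x) for all (x,y). (Equivalently, the kernel of 𝓛_c = −∂_x + ∂_x^{-1}∂_y − 2Q_c(x) is spanned by φ_c = 2Q_c'.) -/

import Mathlib

open Real

/-- The kink profile `Q_c(x) = √(c/2) · tanh(√(c/2)·x)`. -/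
noncomputable def kinkProfile (c x : ℝ) : ℝ := Real.sqrt (c / 2) * Real.tanh (Real.sqrt (c / 2) * x)

/-- A smooth real-valued function on `ℝ²`, `2π`-periodic in the second variable, which is
rapidly decaying in `x` together with all its partial derivatives, uniformly in `y`. -/
structure PeriodicSchwartzX (u : ℝ → ℝ → ℝ) : Prop where
  smooth : ContDiff ℝ (⊤ : ℕ∞) (fun p : ℝ × ℝ => u p.1 p.2)
  periodic : ∀ x y, u x (y + 2 * π) = u x y
  decay : ∀ n m : ℕ, ∃ C : ℝ, ∀ x y : ℝ,
    ‖iteratedFDeriv ℝ n (fun p : ℝ × ℝ => u p.1 p.2) (x, y)‖ ≤ C / (1 + |x|) ^ m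

namespace KdVAux

open MeasureTheory Filter Topology Set

/-- The derivative of the kink profile. -/
noncomputable def qd (c x : ℝ) : ℝ :=
  Real.sqrt (c / 2) ^ 2 / Real.cosh (Real.sqrt (c / 2) * x) ^ 2

lemma kink_hasDerivAt (c x : ℝ) : HasDerivAt (kinkProfile c) (qd c x) x := by
  set a := Real.sqrt (c / 2) with ha
  have h1 : HasDerivAt (fun t : ℝ => a * t) a x := by
    simpa using (hasDerivAt_id x).const_mul a
  have hs : HasDerivAt (fun t : ℝ => Real.sinh (a * t)) (Real.cosh (a * x) * a) x :=
    (Real.hasDerivAt_sinh (a * x)).comp x h1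
  have hc : HasDerivAt (fun t : ℝ => Real.cosh (a * t)) (Real.sinh (a * x) * a) x :=
    (Real.hasDerivAt_cosh (a * x)).comp x h1
  have hdiv := (hs.div hc (Real.cosh_pos (a * x)).ne').const_mul a
  have heqf : (fun t : ℝ => a * (Real.sinh (a * t) / Real.cosh (a * t))) = kinkProfile c := by
    funext t
    rw [kinkProfile, Real.tanh_eq_sinh_div_cosh]
  replace hdiv : HasDerivAt (fun t : ℝ => a * (Real.sinh (a * t) / Real.cosh (a * t))) _ x := hdiv
  rw [heqf] at hdiv
  convert hdiv using 1
  have h2 := Real.cosh_sq_sub_sinh_sq (a * x)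
  have h3 : Real.cosh (a * x) * a * Real.cosh (a * x) - Real.sinh (a * x) * (Real.sinh (a * x) * a)
      = a := by linear_combination a * h2
  rw [h3, qd, sq]
  ring

lemma kink_contDiff (c : ℝ) : ContDiff ℝ (⊤ : ℕ∞) (kinkProfile c) := by
  have : kinkProfile c = fun x => Real.sqrt (c / 2) *
      (Real.sinh (Real.sqrt (c / 2) * x) / Real.cosh (Real.sqrt (c / 2) * x)) := by
    funext t; rw [kinkProfile, Real.tanh_eq_sinh_div_cosh]
  rw [this]
  apply ContDiff.mul contDiff_const
  exact (Real.contDiff_sinh.comp (contDiff_const.mul contDiff_id)).div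
    (Real.contDiff_cosh.comp (contDiff_const.mul contDiff_id))
    (fun x => (Real.cosh_pos _).ne')

lemma abs_kink_le (c x : ℝ) : |kinkProfile c x| ≤ Real.sqrt (c / 2) := by
  rw [kinkProfile, abs_mul, abs_of_nonneg (Real.sqrt_nonneg _)]
  have h : |Real.tanh (Real.sqrt (c / 2) * x)| ≤ 1 := by
    set t := Real.sqrt (c / 2) * x
    rw [Real.tanh_eq_sinh_div_cosh, abs_div, abs_of_pos (Real.cosh_pos t)]
    rw [div_le_one (Real.cosh_pos t)]
    rw [Real.abs_sinh]
    calc Real.sinh |t| ≤ Real.cosh |t| := le_of_lt (Real.sinh_lt_cosh _)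
    _ = Real.cosh t := Real.cosh_abs t
  calc Real.sqrt (c / 2) * |Real.tanh (Real.sqrt (c / 2) * x)| ≤ Real.sqrt (c / 2) * 1 :=
    mul_le_mul_of_nonneg_left h (Real.sqrt_nonneg _)
  _ = Real.sqrt (c / 2) := mul_one _

lemma qd_pos {c : ℝ} (hc : 0 < c) (x : ℝ) : 0 < qd c x := by
  rw [qd]
  apply div_pos
  · have : (0:ℝ) < c / 2 := by linarith
    positivity
  · positivity

lemma qd_le (c x : ℝ) : qd c x ≤ Real.sqrt (c / 2) ^ 2 := by
  rw [qd]
  rw [div_le_iff₀ (by positivity)]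
  have h1 : (1:ℝ) ≤ Real.cosh (Real.sqrt (c / 2) * x) ^ 2 := by
    nlinarith [Real.one_le_cosh (Real.sqrt (c / 2) * x)]
  nlinarith [sq_nonneg (Real.sqrt (c / 2)), h1]

lemma abs_qd_le (c x : ℝ) : |qd c x| ≤ Real.sqrt (c / 2) ^ 2 := by
  rw [abs_of_nonneg]
  · exact qd_le c x
  · rw [qd]; positivity


/-! ### Generic slice lemmas -/

lemma norm_e1 : ‖((1:ℝ), (0:ℝ))‖ = 1 := by
  simp [Prod.norm_def]

lemma norm_e2 : ‖((0:ℝ), (1:ℝ))‖ = 1 := by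
  simp [Prod.norm_def]

lemma sliceX_hasDerivAt {F : ℝ × ℝ → ℝ} (hF : Differentiable ℝ F) (x y : ℝ) :
    HasDerivAt (fun t => F (t, y)) (fderiv ℝ F (x, y) (1, 0)) x := by
  have h1 : HasDerivAt (fun t : ℝ => (t, y)) ((1:ℝ), (0:ℝ)) x :=
    (hasDerivAt_id x).prodMk (hasDerivAt_const x y)
  exact (hF (x, y)).hasFDerivAt.comp_hasDerivAt x h1

lemma sliceY_hasDerivAt {F : ℝ × ℝ → ℝ} (hF : Differentiable ℝ F) (x y : ℝ) :
    HasDerivAt (fun t => F (x, t)) (fderiv ℝ F (x, y) (0, 1)) y := by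
  have h1 : HasDerivAt (fun t : ℝ => (x, t)) ((0:ℝ), (1:ℝ)) y :=
    (hasDerivAt_const y x).prodMk (hasDerivAt_id y)
  exact (hF (x, y)).hasFDerivAt.comp_hasDerivAt y h1

lemma fderiv_smooth {F : ℝ × ℝ → ℝ} (hF : ContDiff ℝ (⊤ : ℕ∞) F) (v : ℝ × ℝ) :
    ContDiff ℝ (⊤ : ℕ∞) (fun p => fderiv ℝ F p v) := by
  have h1 : ContDiff ℝ (⊤ : ℕ∞) (fderiv ℝ F) := hF.fderiv_right (by simp)
  exact h1.clm_apply contDiff_const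

/-- Evaluation commutes with differentiation. -/
lemma fderiv_eval {F : ℝ × ℝ → ℝ} (hF : ContDiff ℝ (⊤ : ℕ∞) F) (v w p : ℝ × ℝ) :
    fderiv ℝ (fun q => fderiv ℝ F q v) p w = fderiv ℝ (fderiv ℝ F) p w v := by
  have h1 : ContDiff ℝ (⊤ : ℕ∞) (fderiv ℝ F) := hF.fderiv_right (by simp)
  have h2 : HasFDerivAt (fderiv ℝ F) (fderiv ℝ (fderiv ℝ F) p) p :=
    (h1.differentiable (by simp) p).hasFDerivAt
  have h3 := (ContinuousLinearMap.apply ℝ ℝ v).hasFDerivAt.comp p h2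
  have h4 : (fun q => fderiv ℝ F q v)
      = (ContinuousLinearMap.apply ℝ ℝ v) ∘ (fderiv ℝ F) := rfl
  rw [h4, h3.fderiv]
  rfl

/-- Clairaut for smooth functions on the plane. -/
lemma second_deriv_symm {F : ℝ × ℝ → ℝ} (hF : ContDiff ℝ (⊤ : ℕ∞) F) (v w p : ℝ × ℝ) :
    fderiv ℝ (fun q => fderiv ℝ F q v) p w = fderiv ℝ (fun q => fderiv ℝ F q w) p v := by
  rw [fderiv_eval hF v w p, fderiv_eval hF w v p]
  have h1 : ContDiff ℝ (⊤ : ℕ∞) (fderiv ℝ F) := hF.fderiv_right (by simp)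
  have h2 : HasFDerivAt (fderiv ℝ F) (fderiv ℝ (fderiv ℝ F) p) p :=
    (h1.differentiable (by simp) p).hasFDerivAt
  exact second_derivative_symmetric (fun q => (hF.differentiable (by simp) q).hasFDerivAt) h2 w v

/-! ### Decay transfer lemmas -/

lemma decay_fderiv_apply {F : ℝ × ℝ → ℝ} {C : ℝ} {m : ℕ} {v : ℝ × ℝ} (hv : ‖v‖ = 1)
    (hF : Differentiable ℝ F)
    (h : ∀ x y : ℝ, ‖iteratedFDeriv ℝ 1 F (x, y)‖ ≤ C / (1 + |x|) ^ m) (x y : ℝ) :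
    |fderiv ℝ F (x, y) v| ≤ C / (1 + |x|) ^ m := by
  have h1 : fderiv ℝ F (x, y) v = iteratedFDeriv ℝ 1 F (x, y) ![v] := by
    rw [iteratedFDeriv_one_apply]
    simp
  rw [← Real.norm_eq_abs, h1]
  calc ‖iteratedFDeriv ℝ 1 F (x, y) ![v]‖
      ≤ ‖iteratedFDeriv ℝ 1 F (x, y)‖ * ∏ i : Fin 1, ‖(![v] : Fin 1 → ℝ × ℝ) i‖ :=
        ContinuousMultilinearMap.le_opNorm _ _
    _ = ‖iteratedFDeriv ℝ 1 F (x, y)‖ := by simp [hv]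
    _ ≤ C / (1 + |x|) ^ m := h x y

lemma decay_fderiv2_apply {F : ℝ × ℝ → ℝ} {C : ℝ} {m : ℕ} {v w : ℝ × ℝ}
    (hv : ‖v‖ = 1) (hw : ‖w‖ = 1) (hF : ContDiff ℝ (⊤ : ℕ∞) F)
    (h : ∀ x y : ℝ, ‖iteratedFDeriv ℝ 2 F (x, y)‖ ≤ C / (1 + |x|) ^ m) (x y : ℝ) :
    |fderiv ℝ (fun q => fderiv ℝ F q v) (x, y) w| ≤ C / (1 + |x|) ^ m := by
  have h1 : fderiv ℝ (fun q => fderiv ℝ F q v) (x, y) w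
      = iteratedFDeriv ℝ 2 F (x, y) ![w, v] := by
    rw [fderiv_eval hF v w (x, y), iteratedFDeriv_two_apply]
    simp
  rw [← Real.norm_eq_abs, h1]
  calc ‖iteratedFDeriv ℝ 2 F (x, y) ![w, v]‖
      ≤ ‖iteratedFDeriv ℝ 2 F (x, y)‖ * ∏ i : Fin 2, ‖(![w, v] : Fin 2 → ℝ × ℝ) i‖ :=
        ContinuousMultilinearMap.le_opNorm _ _
    _ = ‖iteratedFDeriv ℝ 2 F (x, y)‖ := by
        rw [Fin.prod_univ_two]
        simp [hv, hw]
    _ ≤ C / (1 + |x|) ^ m := h x y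


/-! ### The solution and its flux -/

noncomputable def UU (u : ℝ → ℝ → ℝ) : ℝ × ℝ → ℝ := fun p => u p.1 p.2

noncomputable def WW (c : ℝ) (u : ℝ → ℝ → ℝ) : ℝ × ℝ → ℝ :=
  fun p => fderiv ℝ (UU u) p (1, 0) + 2 * kinkProfile c p.1 * UU u p

section Main

variable {c : ℝ} {u : ℝ → ℝ → ℝ}

lemma U_smooth (hu : PeriodicSchwartzX u) : ContDiff ℝ (⊤ : ℕ∞) (UU u) := hu.smooth

lemma U_diff (hu : PeriodicSchwartzX u) : Differentiable ℝ (UU u) :=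
  (U_smooth hu).differentiable (by simp)

lemma PXU_smooth (hu : PeriodicSchwartzX u) :
    ContDiff ℝ (⊤ : ℕ∞) (fun p => fderiv ℝ (UU u) p (1, 0)) := fderiv_smooth (U_smooth hu) _

lemma PYU_smooth (hu : PeriodicSchwartzX u) :
    ContDiff ℝ (⊤ : ℕ∞) (fun p => fderiv ℝ (UU u) p (0, 1)) := fderiv_smooth (U_smooth hu) _

lemma W_smooth (hu : PeriodicSchwartzX u) : ContDiff ℝ (⊤ : ℕ∞) (WW c u) := by
  apply (PXU_smooth hu).add
  exact (contDiff_const.mul ((kink_contDiff c).comp contDiff_fst)).mul (U_smooth hu)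

lemma W_diff (hu : PeriodicSchwartzX u) : Differentiable ℝ (WW c u) :=
  (W_smooth hu).differentiable (by simp)

lemma PXW_smooth (hu : PeriodicSchwartzX u) :
    ContDiff ℝ (⊤ : ℕ∞) (fun p => fderiv ℝ (WW c u) p (1, 0)) := fderiv_smooth (W_smooth hu) _

/-- `deriv` of the `x`-slice of `u` is the partial derivative. -/
lemma derivX_u (hu : PeriodicSchwartzX u) (x y : ℝ) :
    deriv (fun x'' => u x'' y) x = fderiv ℝ (UU u) (x, y) (1, 0) :=
  (sliceX_hasDerivAt (U_diff hu) x y).deriv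

/-- The inner function in `heq` is the `x`-slice of `WW`. -/
lemma slice_eq_W (hu : PeriodicSchwartzX u) (y : ℝ) :
    (fun x' => deriv (fun x'' => u x'' y) x' + 2 * kinkProfile c x' * u x' y)
      = fun x' => WW c u (x', y) := by
  funext x'
  rw [derivX_u hu]
  rfl

/-- Translation of the equation: `∂_y u = ∂_x W`. -/
lemma Uy_eq_Wx (hu : PeriodicSchwartzX u)
    (heq : ∀ x y : ℝ,
      deriv (fun y' => u x y') y
        = deriv (fun x' => deriv (fun x'' => u x'' y) x' + 2 * kinkProfile c x' * u x' y) x)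
    (p : ℝ × ℝ) :
    fderiv ℝ (UU u) p (0, 1) = fderiv ℝ (WW c u) p (1, 0) := by
  obtain ⟨x, y⟩ := p
  have h1 : deriv (fun y' => u x y') y = fderiv ℝ (UU u) (x, y) (0, 1) :=
    (sliceY_hasDerivAt (U_diff hu) x y).deriv
  have h2 : deriv (fun x' => WW c u (x', y)) x = fderiv ℝ (WW c u) (x, y) (1, 0) :=
    (sliceX_hasDerivAt (W_diff hu) x y).deriv
  rw [← h1, heq x y, slice_eq_W hu, h2]

/-- `∂_y W` via the product rule. -/
lemma Wy_eq (hu : PeriodicSchwartzX u) (x y : ℝ) :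
    fderiv ℝ (WW c u) (x, y) (0, 1)
      = fderiv ℝ (fun q => fderiv ℝ (UU u) q (1, 0)) (x, y) (0, 1)
        + 2 * kinkProfile c x * fderiv ℝ (UU u) (x, y) (0, 1) := by
  have h1 : HasDerivAt (fun t => WW c u (x, t)) (fderiv ℝ (WW c u) (x, y) (0, 1)) y :=
    sliceY_hasDerivAt (W_diff hu) x y
  have h2 : HasDerivAt (fun t => fderiv ℝ (UU u) (x, t) (1, 0))
      (fderiv ℝ (fun q => fderiv ℝ (UU u) q (1, 0)) (x, y) (0, 1)) y :=
    sliceY_hasDerivAt ((PXU_smooth hu).differentiable (by simp)) x y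
  have h3 : HasDerivAt (fun t => UU u (x, t)) (fderiv ℝ (UU u) (x, y) (0, 1)) y :=
    sliceY_hasDerivAt (U_diff hu) x y
  have h4 := h2.add (h3.const_mul (2 * kinkProfile c x))
  exact h1.unique h4

/-- `∂_x W` via the product rule. -/
lemma Wx_eq (hu : PeriodicSchwartzX u) (x y : ℝ) :
    fderiv ℝ (WW c u) (x, y) (1, 0)
      = fderiv ℝ (fun q => fderiv ℝ (UU u) q (1, 0)) (x, y) (1, 0)
        + (2 * qd c x * UU u (x, y)
            + 2 * kinkProfile c x * fderiv ℝ (UU u) (x, y) (1, 0)) := by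
  have h1 : HasDerivAt (fun t => WW c u (t, y)) (fderiv ℝ (WW c u) (x, y) (1, 0)) x :=
    sliceX_hasDerivAt (W_diff hu) x y
  have h2 : HasDerivAt (fun t => fderiv ℝ (UU u) (t, y) (1, 0))
      (fderiv ℝ (fun q => fderiv ℝ (UU u) q (1, 0)) (x, y) (1, 0)) x :=
    sliceX_hasDerivAt ((PXU_smooth hu).differentiable (by simp)) x y
  have h3 : HasDerivAt (fun t => UU u (t, y)) (fderiv ℝ (UU u) (x, y) (1, 0)) x :=
    sliceX_hasDerivAt (U_diff hu) x y
  have hq : HasDerivAt (fun t => 2 * kinkProfile c t) (2 * qd c x) x :=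
    (kink_hasDerivAt c x).const_mul 2
  have h4 := h2.add (hq.mul h3)
  exact h1.unique h4

/-- The flux satisfies the drift-diffusion equation `∂_y W = ∂_x² W + 2 Q ∂_x W`. -/
lemma W_pde (hu : PeriodicSchwartzX u)
    (heq : ∀ x y : ℝ,
      deriv (fun y' => u x y') y
        = deriv (fun x' => deriv (fun x'' => u x'' y) x' + 2 * kinkProfile c x' * u x' y) x)
    (x y : ℝ) :
    fderiv ℝ (WW c u) (x, y) (0, 1)
      = fderiv ℝ (fun q => fderiv ℝ (WW c u) q (1, 0)) (x, y) (1, 0)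
        + 2 * kinkProfile c x * fderiv ℝ (WW c u) (x, y) (1, 0) := by
  have hPY_eq_PXW : (fun q => fderiv ℝ (UU u) q (0, 1))
      = (fun q => fderiv ℝ (WW c u) q (1, 0)) := funext (Uy_eq_Wx hu heq)
  have hsymm : fderiv ℝ (fun q => fderiv ℝ (UU u) q (1, 0)) (x, y) (0, 1)
      = fderiv ℝ (fun q => fderiv ℝ (UU u) q (0, 1)) (x, y) (1, 0) :=
    second_deriv_symm (U_smooth hu) (1, 0) (0, 1) (x, y)
  rw [Wy_eq hu x y, hsymm, hPY_eq_PXW, Uy_eq_Wx hu heq]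

/-- Periodicity of `U`. -/
lemma U_per (hu : PeriodicSchwartzX u) (x y : ℝ) : UU u (x, y + 2 * π) = UU u (x, y) :=
  hu.periodic x y

/-- Periodicity of `∂_x U`. -/
lemma PXU_per (hu : PeriodicSchwartzX u) (x y : ℝ) :
    fderiv ℝ (UU u) (x, y + 2 * π) (1, 0) = fderiv ℝ (UU u) (x, y) (1, 0) := by
  have h1 : HasDerivAt (fun t => UU u (t, y + 2 * π))
      (fderiv ℝ (UU u) (x, y + 2 * π) (1, 0)) x := sliceX_hasDerivAt (U_diff hu) x (y + 2 * π)
  have heqf : (fun t => UU u (t, y + 2 * π)) = fun t => UU u (t, y) :=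
    funext fun t => hu.periodic t y
  rw [heqf] at h1
  exact h1.unique (sliceX_hasDerivAt (U_diff hu) x y)

/-- Periodicity of `W`. -/
lemma W_per (hu : PeriodicSchwartzX u) (x y : ℝ) : WW c u (x, y + 2 * π) = WW c u (x, y) := by
  show fderiv ℝ (UU u) (x, y + 2 * π) (1, 0) + 2 * kinkProfile c x * UU u (x, y + 2 * π)
      = fderiv ℝ (UU u) (x, y) (1, 0) + 2 * kinkProfile c x * UU u (x, y)
  rw [PXU_per hu, U_per hu]


/-! ### Decay bounds -/

/-- Decay of `U`. -/
lemma dU (hu : PeriodicSchwartzX u) (m : ℕ) :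
    ∃ C : ℝ, 0 ≤ C ∧ ∀ x y : ℝ, |UU u (x, y)| ≤ C / (1 + |x|) ^ m := by
  obtain ⟨C, hC⟩ := hu.decay 0 m
  have h0 : (0:ℝ) ≤ C := by
    have h1 := (norm_nonneg (iteratedFDeriv ℝ 0 (fun p : ℝ × ℝ => u p.1 p.2) (0, 0))).trans
      (hC 0 0)
    have : ((1:ℝ) + |(0:ℝ)|) ^ m = 1 := by simp
    rw [this, div_one] at h1
    exact h1
  refine ⟨C, h0, fun x y => ?_⟩
  have h2 := hC x y
  rwa [norm_iteratedFDeriv_zero, Real.norm_eq_abs] at h2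

/-- Decay of first partials of `U`. -/
lemma dU1 (hu : PeriodicSchwartzX u) {v : ℝ × ℝ} (hv : ‖v‖ = 1) (m : ℕ) :
    ∃ C : ℝ, 0 ≤ C ∧ ∀ x y : ℝ, |fderiv ℝ (UU u) (x, y) v| ≤ C / (1 + |x|) ^ m := by
  obtain ⟨C, hC⟩ := hu.decay 1 m
  have h0 : (0:ℝ) ≤ C := by
    have h1 := (norm_nonneg (iteratedFDeriv ℝ 1 (fun p : ℝ × ℝ => u p.1 p.2) (0, 0))).trans
      (hC 0 0)
    have : ((1:ℝ) + |(0:ℝ)|) ^ m = 1 := by simp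
    rw [this, div_one] at h1
    exact h1
  exact ⟨C, h0, decay_fderiv_apply hv (U_diff hu) hC⟩

/-- Decay of second partials of `U`. -/
lemma dU2 (hu : PeriodicSchwartzX u) {v w : ℝ × ℝ} (hv : ‖v‖ = 1) (hw : ‖w‖ = 1) (m : ℕ) :
    ∃ C : ℝ, 0 ≤ C ∧ ∀ x y : ℝ,
      |fderiv ℝ (fun q => fderiv ℝ (UU u) q v) (x, y) w| ≤ C / (1 + |x|) ^ m := by
  obtain ⟨C, hC⟩ := hu.decay 2 m
  have h0 : (0:ℝ) ≤ C := by
    have h1 := (norm_nonneg (iteratedFDeriv ℝ 2 (fun p : ℝ × ℝ => u p.1 p.2) (0, 0))).trans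
      (hC 0 0)
    have : ((1:ℝ) + |(0:ℝ)|) ^ m = 1 := by simp
    rw [this, div_one] at h1
    exact h1
  exact ⟨C, h0, decay_fderiv2_apply hv hw (U_smooth hu) hC⟩

/-- Decay of `W`. -/
lemma dW (hu : PeriodicSchwartzX u) (m : ℕ) :
    ∃ C : ℝ, 0 ≤ C ∧ ∀ x y : ℝ, |WW c u (x, y)| ≤ C / (1 + |x|) ^ m := by
  obtain ⟨C1, hC1, h1⟩ := dU1 hu norm_e1 m
  obtain ⟨C0, hC0, h0⟩ := dU hu m
  set a := Real.sqrt (c / 2)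
  have ha : 0 ≤ a := Real.sqrt_nonneg _
  refine ⟨C1 + 2 * a * C0, by positivity, fun x y => ?_⟩
  have hd : (0:ℝ) < (1 + |x|) ^ m := by positivity
  have hk := abs_kink_le c x
  calc |WW c u (x, y)|
      ≤ |fderiv ℝ (UU u) (x, y) (1, 0)| + |2 * kinkProfile c x * UU u (x, y)| := abs_add_le _ _
    _ ≤ C1 / (1 + |x|) ^ m + 2 * a * (C0 / (1 + |x|) ^ m) := by
        apply add_le_add (h1 x y)
        rw [abs_mul, abs_mul, abs_two]
        have := h0 x y
        have h2 : |kinkProfile c x| * |UU u (x, y)| ≤ a * (C0 / (1 + |x|) ^ m) :=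
          mul_le_mul hk (h0 x y) (abs_nonneg _) ha
        calc 2 * |kinkProfile c x| * |UU u (x, y)|
            = 2 * (|kinkProfile c x| * |UU u (x, y)|) := by ring
          _ ≤ 2 * (a * (C0 / (1 + |x|) ^ m)) := by linarith
          _ = 2 * a * (C0 / (1 + |x|) ^ m) := by ring
    _ = (C1 + 2 * a * C0) / (1 + |x|) ^ m := by
        field_simp
        try ring

/-- Decay of `∂_x W`. -/
lemma dWx (hu : PeriodicSchwartzX u) (m : ℕ) :
    ∃ C : ℝ, 0 ≤ C ∧ ∀ x y : ℝ, |fderiv ℝ (WW c u) (x, y) (1, 0)| ≤ C / (1 + |x|) ^ m := by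
  obtain ⟨C2, hC2, h2⟩ := dU2 hu norm_e1 norm_e1 m
  obtain ⟨C1, hC1, h1⟩ := dU1 hu norm_e1 m
  obtain ⟨C0, hC0, h0⟩ := dU hu m
  set a := Real.sqrt (c / 2)
  have ha : 0 ≤ a := Real.sqrt_nonneg _
  refine ⟨C2 + 2 * a ^ 2 * C0 + 2 * a * C1, by positivity, fun x y => ?_⟩
  have hd : (0:ℝ) < (1 + |x|) ^ m := by positivity
  rw [Wx_eq hu x y]
  have hq := abs_qd_le c x
  have hk := abs_kink_le c x
  have e0 := h0 x y
  have e1 := h1 x y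
  have e2 := h2 x y
  have t1 : |2 * qd c x * UU u (x, y)| ≤ 2 * a ^ 2 * (C0 / (1 + |x|) ^ m) := by
    rw [abs_mul, abs_mul, abs_two]
    have := mul_le_mul hq e0 (abs_nonneg _) (by positivity)
    nlinarith [abs_nonneg (qd c x), abs_nonneg (UU u (x, y))]
  have t2 : |2 * kinkProfile c x * fderiv ℝ (UU u) (x, y) (1, 0)|
      ≤ 2 * a * (C1 / (1 + |x|) ^ m) := by
    rw [abs_mul, abs_mul, abs_two]
    have := mul_le_mul hk e1 (abs_nonneg _) ha
    nlinarith [abs_nonneg (kinkProfile c x), abs_nonneg (fderiv ℝ (UU u) (x, y) (1, 0))]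
  calc |fderiv ℝ (fun q => fderiv ℝ (UU u) q (1, 0)) (x, y) (1, 0)
        + (2 * qd c x * UU u (x, y) + 2 * kinkProfile c x * fderiv ℝ (UU u) (x, y) (1, 0))|
      ≤ |fderiv ℝ (fun q => fderiv ℝ (UU u) q (1, 0)) (x, y) (1, 0)|
        + |2 * qd c x * UU u (x, y) + 2 * kinkProfile c x * fderiv ℝ (UU u) (x, y) (1, 0)| :=
        abs_add_le _ _
    _ ≤ |fderiv ℝ (fun q => fderiv ℝ (UU u) q (1, 0)) (x, y) (1, 0)|
        + (|2 * qd c x * UU u (x, y)|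
            + |2 * kinkProfile c x * fderiv ℝ (UU u) (x, y) (1, 0)|) := by
        have := abs_add_le (2 * qd c x * UU u (x, y))
          (2 * kinkProfile c x * fderiv ℝ (UU u) (x, y) (1, 0))
        linarith
    _ ≤ C2 / (1 + |x|) ^ m + (2 * a ^ 2 * (C0 / (1 + |x|) ^ m)
          + 2 * a * (C1 / (1 + |x|) ^ m)) := by linarith
    _ = (C2 + 2 * a ^ 2 * C0 + 2 * a * C1) / (1 + |x|) ^ m := by
        field_simp
        try ring

/-- Decay of `∂_y W`. -/
lemma dWy (hu : PeriodicSchwartzX u) (m : ℕ) :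
    ∃ C : ℝ, 0 ≤ C ∧ ∀ x y : ℝ, |fderiv ℝ (WW c u) (x, y) (0, 1)| ≤ C / (1 + |x|) ^ m := by
  obtain ⟨C2, hC2, h2⟩ := dU2 hu norm_e1 norm_e2 m
  obtain ⟨C1, hC1, h1⟩ := dU1 hu norm_e2 m
  set a := Real.sqrt (c / 2)
  have ha : 0 ≤ a := Real.sqrt_nonneg _
  refine ⟨C2 + 2 * a * C1, by positivity, fun x y => ?_⟩
  have hd : (0:ℝ) < (1 + |x|) ^ m := by positivity
  rw [Wy_eq hu x y]
  have hk := abs_kink_le c x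
  have e1 := h1 x y
  have e2 := h2 x y
  have t2 : |2 * kinkProfile c x * fderiv ℝ (UU u) (x, y) (0, 1)|
      ≤ 2 * a * (C1 / (1 + |x|) ^ m) := by
    rw [abs_mul, abs_mul, abs_two]
    have := mul_le_mul hk e1 (abs_nonneg _) ha
    nlinarith [abs_nonneg (kinkProfile c x), abs_nonneg (fderiv ℝ (UU u) (x, y) (0, 1))]
  calc |fderiv ℝ (fun q => fderiv ℝ (UU u) q (1, 0)) (x, y) (0, 1)
        + 2 * kinkProfile c x * fderiv ℝ (UU u) (x, y) (0, 1)|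
      ≤ |fderiv ℝ (fun q => fderiv ℝ (UU u) q (1, 0)) (x, y) (0, 1)|
        + |2 * kinkProfile c x * fderiv ℝ (UU u) (x, y) (0, 1)| := abs_add_le _ _
    _ ≤ C2 / (1 + |x|) ^ m + 2 * a * (C1 / (1 + |x|) ^ m) := by linarith
    _ = (C2 + 2 * a * C1) / (1 + |x|) ^ m := by
        field_simp
        try ring


/-! ### Integration helpers -/

lemma one_add_sq_le (x : ℝ) : 1 + x ^ 2 ≤ (1 + |x|) ^ 2 := by
  nlinarith [abs_nonneg x, sq_abs x]

lemma integrable_of_decay2 {f : ℝ → ℝ} (hf : Continuous f) {C : ℝ} (hC : 0 ≤ C)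
    (h : ∀ x, |f x| ≤ C / (1 + |x|) ^ 2) : MeasureTheory.Integrable f := by
  apply MeasureTheory.Integrable.mono' (integrable_inv_one_add_sq.const_mul C)
    hf.aestronglyMeasurable
  filter_upwards with x
  rw [Real.norm_eq_abs]
  refine (h x).trans ?_
  rw [← div_eq_mul_inv]
  gcongr
  exact one_add_sq_le x

lemma tendsto_decay_atTop {f : ℝ → ℝ} {C : ℝ} (h : ∀ x, |f x| ≤ C / (1 + |x|)) :
    Filter.Tendsto f Filter.atTop (nhds 0) := by
  have h1 : Filter.Tendsto (fun x : ℝ => 1 + |x|) Filter.atTop Filter.atTop :=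
    Filter.tendsto_atTop_add_const_left _ 1 tendsto_abs_atTop_atTop
  have h2 := h1.inv_tendsto_atTop
  have h3 : Filter.Tendsto (fun x : ℝ => C / (1 + |x|)) Filter.atTop (nhds 0) := by
    simpa [div_eq_mul_inv] using h2.const_mul C
  exact squeeze_zero_norm (fun x => by rw [Real.norm_eq_abs]; exact h x) h3

lemma tendsto_decay_atBot {f : ℝ → ℝ} {C : ℝ} (h : ∀ x, |f x| ≤ C / (1 + |x|)) :
    Filter.Tendsto f Filter.atBot (nhds 0) := by
  have h1 : Filter.Tendsto (fun x : ℝ => 1 + |x|) Filter.atBot Filter.atTop :=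
    Filter.tendsto_atTop_add_const_left _ 1 tendsto_abs_atBot_atTop
  have h2 := h1.inv_tendsto_atTop
  have h3 : Filter.Tendsto (fun x : ℝ => C / (1 + |x|)) Filter.atBot (nhds 0) := by
    simpa [div_eq_mul_inv] using h2.const_mul C
  exact squeeze_zero_norm (fun x => by rw [Real.norm_eq_abs]; exact h x) h3

lemma mul_decay {A B s t : ℝ} {d : ℝ} (hd : 0 < d)
    (h1 : |s| ≤ A / d) (h2 : |t| ≤ B / d) : |s * t| ≤ A * B / d ^ 2 := by
  rw [abs_mul]
  calc |s| * |t| ≤ (A / d) * (B / d) :=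
    mul_le_mul h1 h2 (abs_nonneg t) ((abs_nonneg s).trans h1)
  _ = A * B / d ^ 2 := by
    rw [div_mul_div_comm, sq]

lemma div_sq_le_div {C d : ℝ} (hC : 0 ≤ C) (hd : 1 ≤ d) : C / d ^ 2 ≤ C / d := by
  gcongr
  nlinarith

lemma one_le_one_add_abs (x : ℝ) : 1 ≤ 1 + |x| := by
  have := abs_nonneg x; linarith

/-! ### Continuity of slices -/

lemma contX {F : ℝ × ℝ → ℝ} (hF : Continuous F) (y : ℝ) :
    Continuous fun x => F (x, y) := hF.comp (continuous_id.prodMk continuous_const)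

lemma qd_continuous (c : ℝ) : Continuous (qd c) := by
  apply Continuous.div continuous_const
  · exact (Real.continuous_cosh.comp (continuous_const.mul continuous_id)).pow 2
  · intro x
    positivity

/-! ### The energy identity -/

section Energy

variable {c : ℝ} {u : ℝ → ℝ → ℝ}

lemma int_WPXW2 (hu : PeriodicSchwartzX u) (y : ℝ) :
    MeasureTheory.Integrable (fun x => fderiv ℝ (WW c u) (x, y) (1, 0) ^ 2) := by
  obtain ⟨C, hC, h⟩ := dWx hu 1
  simp only [pow_one] at h
  apply integrable_of_decay2 ?_ (mul_nonneg hC hC)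
  · intro x
    have hd := lt_of_lt_of_le one_pos (one_le_one_add_abs x)
    have h2 := mul_decay hd (h x y) (h x y)
    calc |fderiv ℝ (WW c u) (x, y) (1, 0) ^ 2|
        = |fderiv ℝ (WW c u) (x, y) (1, 0) * fderiv ℝ (WW c u) (x, y) (1, 0)| := by rw [sq]
      _ ≤ C * C / (1 + |x|) ^ 2 := h2
  · exact (contX ((PXW_smooth hu).continuous) y).pow 2

lemma int_qdW2 (hu : PeriodicSchwartzX u) (y : ℝ) :
    MeasureTheory.Integrable (fun x => qd c x * WW c u (x, y) ^ 2) := by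
  obtain ⟨C, hC, h⟩ := dW hu 1
  simp only [pow_one] at h
  set a := Real.sqrt (c / 2)
  have ha : 0 ≤ a := Real.sqrt_nonneg _
  apply integrable_of_decay2 ?_ (by positivity : (0:ℝ) ≤ a ^ 2 * (C * C))
  · intro x
    have hd := lt_of_lt_of_le one_pos (one_le_one_add_abs x)
    have h2 := mul_decay hd (h x y) (h x y)
    calc |qd c x * WW c u (x, y) ^ 2|
        = |qd c x| * |WW c u (x, y) * WW c u (x, y)| := by rw [abs_mul, sq]
      _ ≤ a ^ 2 * (C * C / (1 + |x|) ^ 2) :=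
          mul_le_mul (abs_qd_le c x) h2 (abs_nonneg _) (by positivity)
      _ = a ^ 2 * (C * C) / (1 + |x|) ^ 2 := by ring
  · exact (qd_continuous c).mul ((contX ((W_smooth hu).continuous) y).pow 2)

lemma int_WPYW (hu : PeriodicSchwartzX u) (y : ℝ) :
    MeasureTheory.Integrable (fun x => WW c u (x, y) * fderiv ℝ (WW c u) (x, y) (0, 1)) := by
  obtain ⟨C1, hC1, h1⟩ := dW hu 1
  obtain ⟨C2, hC2, h2⟩ := dWy hu 1
  simp only [pow_one] at h1 h2
  apply integrable_of_decay2 ?_ (mul_nonneg hC1 hC2)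
  · intro x
    have hd := lt_of_lt_of_le one_pos (one_le_one_add_abs x)
    exact mul_decay hd (h1 x y) (h2 x y)
  · exact (contX ((W_smooth hu).continuous) y).mul
      (contX (fderiv_smooth (W_smooth hu) (0, 1)).continuous y)


/-- The key integration-by-parts/energy identity:
`∫ W ∂_y W dx = -∫ ((∂_x W)² + Q' W²) dx`. -/
lemma energy (hu : PeriodicSchwartzX u)
    (heq : ∀ x y : ℝ,
      deriv (fun y' => u x y') y
        = deriv (fun x' => deriv (fun x'' => u x'' y) x' + 2 * kinkProfile c x' * u x' y) x)
    (y : ℝ) :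
    (∫ x : ℝ, WW c u (x, y) * fderiv ℝ (WW c u) (x, y) (0, 1))
      = - ∫ x : ℝ, (fderiv ℝ (WW c u) (x, y) (1, 0) ^ 2 + qd c x * WW c u (x, y) ^ 2) := by
  set F : ℝ → ℝ := fun x => WW c u (x, y) * fderiv ℝ (WW c u) (x, y) (1, 0)
      + kinkProfile c x * WW c u (x, y) ^ 2 with hF
  have hFd : ∀ x, HasDerivAt F (fderiv ℝ (WW c u) (x, y) (1, 0) ^ 2
      + qd c x * WW c u (x, y) ^ 2
      + WW c u (x, y) * fderiv ℝ (WW c u) (x, y) (0, 1)) x := by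
    intro x
    have hW : HasDerivAt (fun t => WW c u (t, y)) (fderiv ℝ (WW c u) (x, y) (1, 0)) x :=
      sliceX_hasDerivAt (W_diff hu) x y
    have hWx : HasDerivAt (fun t => fderiv ℝ (WW c u) (t, y) (1, 0))
        (fderiv ℝ (fun q => fderiv ℝ (WW c u) q (1, 0)) (x, y) (1, 0)) x :=
      sliceX_hasDerivAt ((PXW_smooth hu).differentiable (by simp)) x y
    have hQ := kink_hasDerivAt c x
    have h1 := (hW.mul hWx).add (hQ.mul (hW.pow 2))
    refine h1.congr_deriv ?_
    rw [W_pde hu heq x y]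
    simp only [Pi.pow_apply]
    push_cast
    ring
  have hAB : MeasureTheory.Integrable
      (fun x => fderiv ℝ (WW c u) (x, y) (1, 0) ^ 2 + qd c x * WW c u (x, y) ^ 2) :=
    (int_WPXW2 (c := c) hu y).add (int_qdW2 (c := c) hu y)
  have hC := int_WPYW (c := c) hu y
  have hInt : MeasureTheory.Integrable (fun x => fderiv ℝ (WW c u) (x, y) (1, 0) ^ 2
      + qd c x * WW c u (x, y) ^ 2
      + WW c u (x, y) * fderiv ℝ (WW c u) (x, y) (0, 1)) := hAB.add hC
  obtain ⟨C1, hC1, h1⟩ := dW hu 1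
  obtain ⟨C2, hC2, h2⟩ := dWx hu 1
  simp only [pow_one] at h1 h2
  set a := Real.sqrt (c / 2) with ha'
  have ha : 0 ≤ a := Real.sqrt_nonneg _
  have hFbd : ∀ x, |F x| ≤ (C1 * C2 + a * (C1 * C1)) / (1 + |x|) := by
    intro x
    have hd1 : (1:ℝ) ≤ 1 + |x| := one_le_one_add_abs x
    have hd : (0:ℝ) < 1 + |x| := lt_of_lt_of_le one_pos hd1
    have t1 : |WW c u (x, y) * fderiv ℝ (WW c u) (x, y) (1, 0)| ≤ C1 * C2 / (1 + |x|) ^ 2 :=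
      mul_decay hd (h1 x y) (h2 x y)
    have t2 : |kinkProfile c x * WW c u (x, y) ^ 2| ≤ a * (C1 * C1) / (1 + |x|) ^ 2 := by
      have hw2 : |WW c u (x, y) ^ 2| ≤ C1 * C1 / (1 + |x|) ^ 2 := by
        rw [sq]; exact mul_decay hd (h1 x y) (h1 x y)
      rw [abs_mul]
      calc |kinkProfile c x| * |WW c u (x, y) ^ 2| ≤ a * (C1 * C1 / (1 + |x|) ^ 2) :=
        mul_le_mul (abs_kink_le c x) hw2 (abs_nonneg _) ha
      _ = a * (C1 * C1) / (1 + |x|) ^ 2 := by ring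
    calc |F x| ≤ |WW c u (x, y) * fderiv ℝ (WW c u) (x, y) (1, 0)|
          + |kinkProfile c x * WW c u (x, y) ^ 2| := by
          rw [hF]; exact abs_add_le _ _
      _ ≤ C1 * C2 / (1 + |x|) ^ 2 + a * (C1 * C1) / (1 + |x|) ^ 2 := add_le_add t1 t2
      _ = (C1 * C2 + a * (C1 * C1)) / (1 + |x|) ^ 2 := by rw [← add_div]
      _ ≤ (C1 * C2 + a * (C1 * C1)) / (1 + |x|) := div_sq_le_div (by positivity) hd1
  have htop : Filter.Tendsto F Filter.atTop (nhds 0) := tendsto_decay_atTop hFbd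
  have hbot : Filter.Tendsto F Filter.atBot (nhds 0) := tendsto_decay_atBot hFbd
  have hIic := MeasureTheory.integral_Iic_of_hasDerivAt_of_tendsto
    (a := (0:ℝ)) (hFd 0).continuousAt.continuousWithinAt (fun x _ => hFd x)
    hInt.integrableOn hbot
  have hIoi := MeasureTheory.integral_Ioi_of_hasDerivAt_of_tendsto
    (a := (0:ℝ)) (hFd 0).continuousAt.continuousWithinAt (fun x _ => hFd x)
    hInt.integrableOn htop
  have htotal : (∫ x : ℝ, (fderiv ℝ (WW c u) (x, y) (1, 0) ^ 2
      + qd c x * WW c u (x, y) ^ 2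
      + WW c u (x, y) * fderiv ℝ (WW c u) (x, y) (0, 1))) = 0 := by
    rw [← intervalIntegral.integral_Iic_add_Ioi hInt.integrableOn hInt.integrableOn,
      hIic, hIoi]
    ring
  rw [MeasureTheory.integral_add hAB hC] at htotal
  linarith


/-- The energy `G(y) = ∫ W(x,y)² dx`. -/
noncomputable def GG (c : ℝ) (u : ℝ → ℝ → ℝ) (y : ℝ) : ℝ := ∫ x : ℝ, WW c u (x, y) ^ 2

/-- The dissipation `H(y) = ∫ ((∂ₓW)² + Q' W²) dx`. -/
noncomputable def HH (c : ℝ) (u : ℝ → ℝ → ℝ) (y : ℝ) : ℝ :=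
  ∫ x : ℝ, (fderiv ℝ (WW c u) (x, y) (1, 0) ^ 2 + qd c x * WW c u (x, y) ^ 2)

lemma HH_nonneg (hc : 0 < c) (y : ℝ) : 0 ≤ HH c u y := by
  apply MeasureTheory.integral_nonneg
  intro x
  have := (qd_pos hc x).le
  positivity

lemma int_W2 (hu : PeriodicSchwartzX u) (y : ℝ) :
    MeasureTheory.Integrable (fun x => WW c u (x, y) ^ 2) := by
  obtain ⟨C, hC, h⟩ := dW (c := c) hu 1
  simp only [pow_one] at h
  apply integrable_of_decay2 ?_ (mul_nonneg hC hC)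
  · intro x
    have hd := lt_of_lt_of_le one_pos (one_le_one_add_abs x)
    have h2 := mul_decay hd (h x y) (h x y)
    rw [sq]
    exact h2
  · exact (contX ((W_smooth hu).continuous) y).pow 2

lemma GG_hasDerivAt (hu : PeriodicSchwartzX u)
    (heq : ∀ x y : ℝ,
      deriv (fun y' => u x y') y
        = deriv (fun x' => deriv (fun x'' => u x'' y) x' + 2 * kinkProfile c x' * u x' y) x)
    (y : ℝ) :
    HasDerivAt (GG c u) (-2 * HH c u y) y := by
  obtain ⟨C1, hC1, h1⟩ := dW (c := c) hu 1
  obtain ⟨C2, hC2, h2⟩ := dWy (c := c) hu 1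
  simp only [pow_one] at h1 h2
  have key := (hasDerivAt_integral_of_dominated_loc_of_deriv_le
    (μ := MeasureTheory.volume) (x₀ := y)
    (F := fun y' x => WW c u (x, y') ^ 2)
    (F' := fun y' x => 2 * WW c u (x, y') * fderiv ℝ (WW c u) (x, y') (0, 1))
    (bound := fun x => 2 * C1 * C2 * (1 + x ^ 2)⁻¹)
    (Metric.ball_mem_nhds y one_pos)
    (Filter.Eventually.of_forall fun y' =>
      ((contX ((W_smooth hu).continuous) y').pow 2).aestronglyMeasurable)
    (int_W2 hu y)
    ((continuous_const.mul (contX ((W_smooth hu).continuous) y)).mul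
        (contX (fderiv_smooth (W_smooth hu) (0, 1)).continuous y)).aestronglyMeasurable
    (Filter.Eventually.of_forall fun x => fun y' _ => ?_)
    ((integrable_inv_one_add_sq.const_mul (2 * C1 * C2)))
    (Filter.Eventually.of_forall fun x => fun y' _ => ?_)).2
  · refine key.congr_deriv ?_
    have hfun : (fun x => 2 * WW c u (x, y) * fderiv ℝ (WW c u) (x, y) (0, 1))
        = fun x => 2 * (WW c u (x, y) * fderiv ℝ (WW c u) (x, y) (0, 1)) := by
      funext x; ring
    rw [hfun, MeasureTheory.integral_const_mul, energy (c := c) hu heq y, HH]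
    ring
  · -- the bound
    have hd1 : (1:ℝ) ≤ 1 + |x| := one_le_one_add_abs x
    have hd : (0:ℝ) < 1 + |x| := lt_of_lt_of_le one_pos hd1
    have t1 := mul_decay hd (h1 x y') (h2 x y')
    rw [Real.norm_eq_abs]
    calc |2 * WW c u (x, y') * fderiv ℝ (WW c u) (x, y') (0, 1)|
        = 2 * |WW c u (x, y') * fderiv ℝ (WW c u) (x, y') (0, 1)| := by
          rw [mul_assoc, abs_mul, abs_two]
      _ ≤ 2 * (C1 * C2 / (1 + |x|) ^ 2) := by linarith
      _ ≤ 2 * (C1 * C2 / (1 + x ^ 2)) := by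
          have hle := div_le_div₀ (mul_nonneg hC1 hC2) le_rfl
            (by positivity : (0:ℝ) < 1 + x ^ 2) (one_add_sq_le x)
          linarith
      _ = 2 * C1 * C2 * (1 + x ^ 2)⁻¹ := by rw [div_eq_mul_inv]; ring
  · -- differentiability in y'
    have h3 := (sliceY_hasDerivAt (W_diff (c := c) hu) x y').pow 2
    refine h3.congr_deriv ?_
    push_cast
    ring

lemma GG_periodic (hu : PeriodicSchwartzX u) (y : ℝ) :
    GG c u (y + 2 * π) = GG c u y := by
  unfold GG
  congr 1
  funext x
  rw [W_per hu x y]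

lemma GG_eq_const (hc : 0 < c) (hu : PeriodicSchwartzX u)
    (heq : ∀ x y : ℝ,
      deriv (fun y' => u x y') y
        = deriv (fun x' => deriv (fun x'' => u x'' y) x' + 2 * kinkProfile c x' * u x' y) x)
    (y : ℝ) : GG c u y = GG c u 0 := by
  have hanti : Antitone (GG c u) := by
    apply antitone_of_hasDerivAt_nonpos (f' := fun y => -2 * HH c u y)
      (fun y => GG_hasDerivAt hu heq y)
    intro y
    have := HH_nonneg (c := c) (u := u) hc y
    show -2 * HH c u y ≤ (0 : ℝ)
    linarith
  have hper : ∀ n : ℕ, GG c u (2 * π * n) = GG c u 0 ∧ GG c u (-(2 * π * n)) = GG c u 0 := by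
    intro n
    induction n with
    | zero => norm_num
    | succ k ih =>
      constructor
      · have e1 : (2 : ℝ) * π * ((k + 1 : ℕ) : ℝ) = 2 * π * (k : ℝ) + 2 * π := by
          push_cast; ring
        rw [e1, GG_periodic hu, ih.1]
      · have h2 := GG_periodic (c := c) hu (-(2 * π * ((k + 1 : ℕ) : ℝ)))
        have e2 : (-(2 * π * ((k + 1 : ℕ) : ℝ)) + 2 * π) = -(2 * π * (k : ℝ)) := by
          push_cast; ring
        rw [e2] at h2
        rw [← h2]
        exact ih.2
  obtain ⟨n, hn⟩ := exists_nat_ge (|y| / (2 * π))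
  have hpi : (0:ℝ) < 2 * π := by positivity
  have hy1 : |y| ≤ 2 * π * n := by
    rw [div_le_iff₀ hpi] at hn
    linarith
  have hy2 : -(2 * π * n) ≤ y := by
    have := neg_abs_le y
    linarith
  have hy3 : y ≤ 2 * π * n := (le_abs_self y).trans hy1
  have hle1 : GG c u (2 * π * n) ≤ GG c u y := hanti hy3
  have hle2 : GG c u y ≤ GG c u (-(2 * π * n)) := hanti hy2
  rw [(hper n).1] at hle1
  rw [(hper n).2] at hle2
  linarith

lemma HH_eq_zero (hc : 0 < c) (hu : PeriodicSchwartzX u)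
    (heq : ∀ x y : ℝ,
      deriv (fun y' => u x y') y
        = deriv (fun x' => deriv (fun x'' => u x'' y) x' + 2 * kinkProfile c x' * u x' y) x)
    (y : ℝ) : HH c u y = 0 := by
  have h1 := (GG_hasDerivAt hu heq y).deriv
  have h2 : GG c u = fun _ => GG c u 0 := funext (GG_eq_const hc hu heq)
  rw [h2] at h1
  rw [deriv_const] at h1
  linarith

lemma W_eq_zero (hc : 0 < c) (hu : PeriodicSchwartzX u)
    (heq : ∀ x y : ℝ,
      deriv (fun y' => u x y') y
        = deriv (fun x' => deriv (fun x'' => u x'' y) x' + 2 * kinkProfile c x' * u x' y) x)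
    (p : ℝ × ℝ) : WW c u p = 0 := by
  obtain ⟨x, y⟩ := p
  have hzero := HH_eq_zero hc hu heq y
  have hint : MeasureTheory.Integrable
      (fun x => fderiv ℝ (WW c u) (x, y) (1, 0) ^ 2 + qd c x * WW c u (x, y) ^ 2) :=
    (int_WPXW2 (c := c) hu y).add (int_qdW2 (c := c) hu y)
  have hnn : (0 : ℝ → ℝ) ≤ fun x => fderiv ℝ (WW c u) (x, y) (1, 0) ^ 2
      + qd c x * WW c u (x, y) ^ 2 := by
    intro x
    have := (qd_pos hc x).le
    simp only [Pi.zero_apply]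
    positivity
  have hae := (MeasureTheory.integral_eq_zero_iff_of_nonneg hnn hint).1 hzero
  have hcont : Continuous (fun x => fderiv ℝ (WW c u) (x, y) (1, 0) ^ 2
      + qd c x * WW c u (x, y) ^ 2) :=
    ((contX (fderiv_smooth (W_smooth hu) (1, 0)).continuous y).pow 2).add
      ((qd_continuous c).mul ((contX ((W_smooth hu).continuous) y).pow 2))
  have hfun := (Continuous.ae_eq_iff_eq MeasureTheory.volume hcont continuous_const).1 hae
  have hx := congrFun hfun x
  have hx0 : fderiv ℝ (WW c u) (x, y) (1, 0) ^ 2 + qd c x * WW c u (x, y) ^ 2 = 0 := hx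
  have hq := qd_pos hc x
  have hb : 0 ≤ qd c x * WW c u (x, y) ^ 2 := mul_nonneg hq.le (sq_nonneg _)
  have ha' : 0 ≤ fderiv ℝ (WW c u) (x, y) (1, 0) ^ 2 := sq_nonneg _
  have h5 : qd c x * WW c u (x, y) ^ 2 = 0 := by linarith
  have h6 : WW c u (x, y) ^ 2 = 0 := by
    rcases mul_eq_zero.1 h5 with h | h
    · exact absurd h hq.ne'
    · exact h
  exact sq_eq_zero_iff.1 h6

end Energy

end Main

end KdVAux

/-- The kernel of `𝓛_c = −∂_x + ∂_x⁻¹∂_y − 2Q_c` is spanned by `Q_c'`: a smooth,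
`2π`-periodic-in-`y`, rapidly decaying solution of the heat-type equation
`∂_y u = ∂_x(∂_x u + 2Q_c u)` is a multiple of `Q_c'`. -/
theorem ker_mathcalLc_spanned_by_Qc' (c : ℝ) (hc : 0 < c) (u : ℝ → ℝ → ℝ)
    (hu : PeriodicSchwartzX u)
    (heq : ∀ x y : ℝ,
      deriv (fun y' => u x y') y
        = deriv (fun x' => deriv (fun x'' => u x'' y) x' + 2 * kinkProfile c x' * u x' y) x) :
    ∃ α : ℝ, ∀ x y : ℝ, u x y = α * deriv (kinkProfile c) x := by
  classical
  have hW0 := KdVAux.W_eq_zero hc hu heq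
  have hUy0 : ∀ p : ℝ × ℝ, fderiv ℝ (KdVAux.UU u) p (0, 1) = 0 := by
    intro p
    rw [KdVAux.Uy_eq_Wx hu heq p]
    have hWe : KdVAux.WW c u = fun _ => (0:ℝ) := funext hW0
    rw [hWe, fderiv_fun_const]
    simp
  have hy : ∀ x y : ℝ, u x y = u x 0 := by
    intro x y
    have hdiff : Differentiable ℝ (fun t => KdVAux.UU u (x, t)) := fun t =>
      (KdVAux.sliceY_hasDerivAt (KdVAux.U_diff hu) x t).differentiableAt
    have hder : ∀ t, deriv (fun t => KdVAux.UU u (x, t)) t = 0 := fun t => by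
      rw [(KdVAux.sliceY_hasDerivAt (KdVAux.U_diff hu) x t).deriv, hUy0]
    exact is_const_of_deriv_eq_zero hdiff hder y 0
  set a := Real.sqrt (c / 2) with ha'
  have hapos : 0 < a := Real.sqrt_pos.2 (by linarith)
  have hUeq : ∀ x : ℝ, KdVAux.UU u (x, 0) = u x 0 := fun _ => rfl
  have hODE : ∀ x : ℝ, fderiv ℝ (KdVAux.UU u) (x, 0) (1, 0)
      = -(2 * kinkProfile c x * u x 0) := by
    intro x
    have h2 : fderiv ℝ (KdVAux.UU u) (x, 0) (1, 0)
        + 2 * kinkProfile c x * KdVAux.UU u (x, 0) = 0 := hW0 (x, 0)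
    rw [hUeq x] at h2
    linarith [h2]
  have hg : ∀ x : ℝ, HasDerivAt (fun t => KdVAux.UU u (t, 0) * Real.cosh (a * t) ^ 2) 0 x := by
    intro x
    have h1 : HasDerivAt (fun t => KdVAux.UU u (t, 0)) (fderiv ℝ (KdVAux.UU u) (x, 0) (1, 0)) x :=
      KdVAux.sliceX_hasDerivAt (KdVAux.U_diff hu) x 0
    have hax : HasDerivAt (fun t : ℝ => a * t) a x := by
      simpa using (hasDerivAt_id x).const_mul a
    have hcosh : HasDerivAt (fun t => Real.cosh (a * t)) (Real.sinh (a * x) * a) x :=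
      (Real.hasDerivAt_cosh _).comp x hax
    have h2 := h1.mul (hcosh.pow 2)
    refine h2.congr_deriv ?_
    rw [hODE x, hUeq x]
    have hk : kinkProfile c x = a * (Real.sinh (a * x) / Real.cosh (a * x)) := by
      rw [kinkProfile, Real.tanh_eq_sinh_div_cosh]
    rw [hk]
    have hcosh_ne : Real.cosh (a * x) ≠ 0 := (Real.cosh_pos _).ne'
    simp only [Pi.pow_apply]
    push_cast
    field_simp
    ring
  have hgc : ∀ x : ℝ, KdVAux.UU u (x, 0) * Real.cosh (a * x) ^ 2 = KdVAux.UU u (0, 0) := by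
    intro x
    have h3 := is_const_of_deriv_eq_zero
      (f := fun t => KdVAux.UU u (t, 0) * Real.cosh (a * t) ^ 2)
      (fun t => (hg t).differentiableAt) (fun t => (hg t).deriv) x 0
    simpa using h3
  refine ⟨u 0 0 * (2 / c), fun x y => ?_⟩
  rw [(KdVAux.kink_hasDerivAt c x).deriv, hy x y]
  have h1 := hgc x
  rw [hUeq x] at h1
  have hU00 : KdVAux.UU u (0, 0) = u 0 0 := rfl
  rw [hU00] at h1
  have hcosh_ne : Real.cosh (a * x) ≠ 0 := (Real.cosh_pos _).ne'
  have hq : KdVAux.qd c x = a ^ 2 / Real.cosh (a * x) ^ 2 := rfl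
  rw [hq]
  have ha2 : a ^ 2 = c / 2 := Real.sq_sqrt (by linarith)
  rw [ha2, ← h1]
  field_simp
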